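/- Let g be a convex distortion function and α ∈ [0,1). Then the unit disk U = { x ∈ ℝⁿ : ⟨⟨x⟩⟩_α^{S,g} ≤ 1 } of the scaled generalized-ES norm is a convex subset of ℝⁿ. -/

import Mathlib

open Finset

/-- The absolute values of the components of `x`, arranged in increasing order:
`absSorted x i` is `|x|_(i+1)` in the paper's notation. -/
noncomputable def absSorted {n : ℕ} (x : Fin n → ℝ) : Fin n → ℝ :=
  fun i => |x (Tuple.sort (fun j => |x j|) i)|

/-- `coeff n g i = g((i+1)/n) - g(i/n)`, the paper's `c_{i+1}`. -/
noncomputable def coeff (n : ℕ) (g : ℝ → ℝ) (i : Fin n) : ℝ :=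
  g (((i : ℕ) + 1 : ℝ) / n) - g (((i : ℕ) : ℝ) / n)

/-- The objective function whose infimum over `t` defines the scaled generalized-ES norm. -/
noncomputable def sgesObj {n : ℕ} (g : ℝ → ℝ) (α : ℝ) (x : Fin n → ℝ) (t : ℝ) : ℝ :=
  t + (1 - α)⁻¹ * ∑ i, coeff n g i * max (absSorted x i - t) 0

/-- The scaled generalized-ES norm `⟨⟨x⟩⟩_α^{S,g}`. -/
noncomputable def sges {n : ℕ} (g : ℝ → ℝ) (α : ℝ) (x : Fin n → ℝ) : ℝ :=
  ⨅ t : ℝ, sgesObj g α x t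

/-- The non-scaled generalized-ES norm `⟨⟨x⟩⟩_α^{g} = n(1-α)⟨⟨x⟩⟩_α^{S,g}`. -/
noncomputable def nges {n : ℕ} (g : ℝ → ℝ) (α : ℝ) (x : Fin n → ℝ) : ℝ :=
  (n : ℝ) * (1 - α) * sges g α x

/-- The dual norm of a (norm) functional `N` on `ℝⁿ`. -/
noncomputable def dualNorm {n : ℕ} (N : (Fin n → ℝ) → ℝ) (y : Fin n → ℝ) : ℝ :=
  sSup {r : ℝ | ∃ x : Fin n → ℝ, N x ≤ 1 ∧ r = ∑ i, x i * y i}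

/-- The ordered weighted L1 (OWL) norm. -/
noncomputable def owl {n : ℕ} (w : Fin n → ℝ) (x : Fin n → ℝ) : ℝ :=
  ∑ i, w i * absSorted x i

/-!
The objective `t + (1 - α)⁻¹ ∑ cᵢ (|x|_(i) - t)₊` is jointly convex in `(x, t)`. Monotonicity
of `g` makes the weights `cᵢ` nonnegative and convexity makes them increasing, so by the
rearrangement inequality the sum over the sorted `|x|_(i)` dominates the same sum taken in any
other order; sorting `a • x + b • y` and bounding each term by convexity of `(u, s) ↦ (|u| - s)₊`
then gives joint convexity. Since `∑ cᵢ = 1` and `α ≥ 0`, the objective is bounded below by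
`∑ cᵢ |x|_(i)`, so its infimum over `t` is a convex function of `x`, whose sublevel sets are convex.
-/

open Set

theorem convexOn_ciInf_of_convexOn_uncurry {E F : Type*} [AddCommGroup E] [Module ℝ E]
    [AddCommGroup F] [Module ℝ F] [Nonempty F] {f : E → F → ℝ}
    (hf : ConvexOn ℝ univ (Function.uncurry f)) (hbdd : ∀ x, BddBelow (range (f x))) :
    ConvexOn ℝ univ fun x => ⨅ y, f x y := by
  refine ⟨convex_univ, fun x _ x' _ a b ha hb hab => ?_⟩
  simp only [smul_eq_mul]
  refine le_of_forall_pos_le_add fun ε hε => ?_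
  obtain ⟨y, hy⟩ := exists_lt_of_ciInf_lt (lt_add_of_pos_right (⨅ y, f x y) hε)
  obtain ⟨y', hy'⟩ := exists_lt_of_ciInf_lt (lt_add_of_pos_right (⨅ y, f x' y) hε)
  calc ⨅ z, f (a • x + b • x') z ≤ f (a • x + b • x') (a • y + b • y') := ciInf_le (hbdd _) _
    _ ≤ a * f x y + b * f x' y' := hf.2 (mem_univ (x, y)) (mem_univ (x', y')) ha hb hab
    _ ≤ a * ((⨅ y, f x y) + ε) + b * ((⨅ y, f x' y) + ε) := by gcongr
    _ = a * (⨅ y, f x y) + b * (⨅ y, f x' y) + ε := by linear_combination ε * hab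

lemma max_abs_sub_le {a b : ℝ} (ha : 0 ≤ a) (hb : 0 ≤ b) (u v s t : ℝ) :
    max (|a * u + b * v| - (a * s + b * t)) 0 ≤ a * max (|u| - s) 0 + b * max (|v| - t) 0 := by
  have h := abs_add_le (a * u) (b * v)
  rw [abs_mul, abs_mul, abs_of_nonneg ha, abs_of_nonneg hb] at h
  have hu := le_max_left (|u| - s) 0
  have hv := le_max_left (|v| - t) 0
  refine max_le ?_ (by positivity)
  nlinarith [mul_le_mul_of_nonneg_left hu ha, mul_le_mul_of_nonneg_left hv hb]

section SortedSum

variable {n : ℕ}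

lemma sum_mul_comp_abs_perm_le {c : Fin n → ℝ} (hc : Monotone c) {φ : ℝ → ℝ} (hφ : Monotone φ)
    (x : Fin n → ℝ) (π : Equiv.Perm (Fin n)) :
    ∑ i, c i * φ |x (π i)| ≤ ∑ i, c i * φ (absSorted x i) := by
  set σ := Tuple.sort fun j => |x j|
  have hmv : Monovary c (φ ∘ absSorted x) :=
    hc.monovary (hφ.comp (Tuple.monotone_sort fun j => |x j|))
  simpa [absSorted, σ, Equiv.Perm.mul_apply] using
    hmv.sum_smul_comp_perm_le_sum_smul (σ := σ⁻¹ * π)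

theorem convexOn_sum_mul_max_absSorted_sub {c : Fin n → ℝ} (hc0 : ∀ i, 0 ≤ c i)
    (hc : Monotone c) :
    ConvexOn ℝ univ fun p : (Fin n → ℝ) × ℝ => ∑ i, c i * max (absSorted p.1 i - p.2) 0 := by
  refine ⟨convex_univ, fun ⟨x, s⟩ _ ⟨y, t⟩ _ a b ha hb hab => ?_⟩
  simp only [Prod.smul_mk, Prod.mk_add_mk, smul_eq_mul]
  set τ := Tuple.sort fun j => |(a • x + b • y) j|
  calc ∑ i, c i * max (absSorted (a • x + b • y) i - (a * s + b * t)) 0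
      ≤ ∑ i, (a * (c i * max (|x (τ i)| - s) 0) + b * (c i * max (|y (τ i)| - t) 0)) := by
        refine Finset.sum_le_sum fun i _ => ?_
        have := mul_le_mul_of_nonneg_left
          (max_abs_sub_le ha hb (x (τ i)) (y (τ i)) s t) (hc0 i)
        simpa [absSorted, τ, mul_add, mul_left_comm] using this
    _ = a * ∑ i, c i * max (|x (τ i)| - s) 0 + b * ∑ i, c i * max (|y (τ i)| - t) 0 := by
        rw [Finset.sum_add_distrib, Finset.mul_sum, Finset.mul_sum]
    _ ≤ a * ∑ i, c i * max (absSorted x i - s) 0 + b * ∑ i, c i * max (absSorted y i - t) 0 := by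
        have hφ : ∀ r : ℝ, Monotone fun u : ℝ => max (u - r) 0 :=
          fun r u v huv => max_le_max (by linarith) le_rfl
        gcongr a * ?_ + b * ?_
        exacts [sum_mul_comp_abs_perm_le hc (hφ s) x τ, sum_mul_comp_abs_perm_le hc (hφ t) y τ]

end SortedSum

section Coeff

variable {n : ℕ} {g : ℝ → ℝ}

lemma natCast_div_mem_Icc {i : ℕ} (hi : i ≤ n) : (i / n : ℝ) ∈ Set.Icc 0 1 :=
  ⟨by positivity, div_le_one_of_le₀ (by exact_mod_cast hi) n.cast_nonneg⟩

lemma coeff_nonneg (hg : MonotoneOn g (Set.Icc 0 1)) (i : Fin n) : 0 ≤ coeff n g i := by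
  have h := hg (natCast_div_mem_Icc i.isLt.le) (natCast_div_mem_Icc i.isLt)
  simp only [coeff, sub_nonneg]
  push_cast at h
  exact h (by gcongr; linarith)

lemma coeff_monotone (hg : ConvexOn ℝ (Set.Icc 0 1) g) : Monotone (coeff n g) := by
  cases n with
  | zero => exact fun i => i.elim0
  | succ m =>
    refine Fin.monotone_iff_le_succ.2 fun i => ?_
    -- midpoint convexity at (i + 1) / n, between i / n and (i + 2) / n
    have hmid := hg.2 (natCast_div_mem_Icc (n := m + 1) (i := i) (by omega))
      (natCast_div_mem_Icc (n := m + 1) (i := i + 2) (by omega))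
      (by norm_num : (0 : ℝ) ≤ 1 / 2) (by norm_num : (0 : ℝ) ≤ 1 / 2) (by norm_num)
    have hpt : (1 / 2 : ℝ) • ((i : ℕ) / (m + 1 : ℕ) : ℝ) +
        (1 / 2 : ℝ) • (((i + 2 : ℕ) : ℝ) / (m + 1 : ℕ)) = ((i : ℕ) + 1 : ℝ) / (m + 1 : ℕ) := by
      simp only [smul_eq_mul]; push_cast; ring
    rw [hpt, smul_eq_mul, smul_eq_mul] at hmid
    simp only [coeff, Fin.val_castSucc, Fin.val_succ]
    push_cast at hmid ⊢
    have e : ((i : ℝ) + 1 + 1) = (i : ℝ) + 2 := by ring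
    rw [e]
    linarith

lemma sum_coeff (hn : 1 ≤ n) (hg0 : g 0 = 0) (hg1 : g 1 = 1) : ∑ i, coeff n g i = 1 := by
  have hn0 : (n : ℝ) ≠ 0 := by positivity
  have h := Finset.sum_range_sub (fun k : ℕ => g (k / n)) n
  rw [← Fin.sum_univ_eq_sum_range] at h
  simpa [coeff, hg0, hg1, hn0] using h

end Coeff

section Sges

variable {n : ℕ} {g : ℝ → ℝ} {α : ℝ}

theorem convexOn_uncurry_sgesObj (hg_mono : MonotoneOn g (Set.Icc 0 1))
    (hg_conv : ConvexOn ℝ (Set.Icc 0 1) g) (hα : α ≤ 1) :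
    ConvexOn ℝ univ (Function.uncurry (sgesObj (n := n) g α)) :=
  ((LinearMap.snd ℝ (Fin n → ℝ) ℝ).convexOn convex_univ).add
    ((convexOn_sum_mul_max_absSorted_sub (coeff_nonneg hg_mono) (coeff_monotone hg_conv)).smul
      (inv_nonneg.2 (sub_nonneg.2 hα)))

lemma sum_coeff_mul_absSorted_le_sgesObj (hn : 1 ≤ n) (hg_mono : MonotoneOn g (Set.Icc 0 1))
    (hg0 : g 0 = 0) (hg1 : g 1 = 1) (hα : α ∈ Set.Ico 0 1) (x : Fin n → ℝ) (t : ℝ) :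
    ∑ i, coeff n g i * absSorted x i ≤ sgesObj g α x t := by
  set T := ∑ i, coeff n g i * max (absSorted x i - t) 0
  have hT : 0 ≤ T :=
    Finset.sum_nonneg fun i _ => mul_nonneg (coeff_nonneg hg_mono i) (le_max_right _ _)
  have hST : ∑ i, coeff n g i * absSorted x i - t ≤ T := calc
    _ = ∑ i, coeff n g i * (absSorted x i - t) := by
      simp only [mul_sub, Finset.sum_sub_distrib, ← Finset.sum_mul, sum_coeff hn hg0 hg1, one_mul]
    _ ≤ T := Finset.sum_le_sum fun i _ =>
      mul_le_mul_of_nonneg_left (le_max_left _ _) (coeff_nonneg hg_mono i)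
  have hk : 1 ≤ (1 - α)⁻¹ := one_le_inv₀ (by linarith [hα.2]) |>.2 (by linarith [hα.1])
  have : T ≤ (1 - α)⁻¹ * T := le_mul_of_one_le_left hT hk
  simp only [sgesObj]
  linarith

end Sges

/-- for a convex distortion function `g` and `α ∈ [0,1)`, the unit disk
of the scaled generalized-ES norm is a convex subset of `ℝⁿ`. -/
theorem stmt9 (n : ℕ) (hn : 1 ≤ n) (g : ℝ → ℝ)
    (hg_mono : MonotoneOn g (Set.Icc 0 1)) (hg_conv : ConvexOn ℝ (Set.Icc 0 1) g)
    (hg0 : g 0 = 0) (hg1 : g 1 = 1)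
    (α : ℝ) (hα : α ∈ Set.Ico (0 : ℝ) 1) :
    Convex ℝ {x : Fin n → ℝ | sges g α x ≤ 1} := by
  have hbdd (x : Fin n → ℝ) : BddBelow (range (sgesObj g α x)) :=
    ⟨_, forall_mem_range.2 (sum_coeff_mul_absSorted_le_sgesObj hn hg_mono hg0 hg1 hα x)⟩
  simpa [sges] using (convexOn_ciInf_of_convexOn_uncurry
    (convexOn_uncurry_sgesObj hg_mono hg_conv hα.2.le) hbdd).convex_le 1
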